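/- Suppose a = a_1 ⋯ a_r and b = b_1 ⋯ b_s are nonempty strings of symbols. Let T(b) denote the collection of all nonempty finite consecutive substrings of b^t for any t ≥ 1 (strings of consecutive symbols of some finite repetition of b). Then for any integers ℓ, ℓ̃ ≥ 1, f̄(a^ℓ, b^{ℓ̃}) ≥ inf{ f̄(a, c) : c ∈ T(b) }. -/

import Mathlib

open MeasureTheory

namespace Paper

variable {σ : Type*}

/-- The concatenation of `t` copies of the string `w`. -/
def rep (w : List σ) (t : ℕ) : List σ := (List.replicate t w).flatten

/-- `I` is a match between the strings `a` and `b` (with 0-based indices):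
a collection of pairs of indices, strictly increasing in both coordinates,
pairing equal symbols. -/
def IsMatch (a b : List σ) (I : List (ℕ × ℕ)) : Prop :=
  I.Chain' (fun p q => p.1 < q.1 ∧ p.2 < q.2) ∧
  ∀ p ∈ I, p.1 < a.length ∧ p.2 < b.length ∧ a[p.1]? = b[p.2]?

/-- The largest cardinality of a match between `a` and `b`. -/
noncomputable def maxMatch (a b : List σ) : ℕ :=
  sSup {r | ∃ I, IsMatch a b I ∧ I.length = r}

/-- The `f̄` distance between two strings. -/
noncomputable def fbar (a b : List σ) : ℝ :=
  1 - 2 * (maxMatch a b : ℝ) / (a.length + b.length)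

/-- `I` is an approximate match between the strings `a` and `b` (0-based indices):
pairs of indices, nondecreasing in each coordinate and strictly increasing as pairs,
pairing equal symbols, such that the set of indices paired with any given index is
contained in a set of three consecutive indices. -/
def IsApproxMatch (a b : List σ) (I : List (ℕ × ℕ)) : Prop :=
  I.Chain' (fun p q => p.1 ≤ q.1 ∧ p.2 ≤ q.2 ∧ p ≠ q) ∧
  (∀ p ∈ I, p.1 < a.length ∧ p.2 < b.length ∧ a[p.1]? = b[p.2]?) ∧
  (∀ p ∈ I, (∃ s, ∀ q ∈ I, q.1 = p.1 → q.2 ∈ ({s, s+1, s+2} : Set ℕ)) ∧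
            (∃ t, ∀ q ∈ I, q.2 = p.2 → q.1 ∈ ({t, t+1, t+2} : Set ℕ)))

/-- The largest cardinality of an approximate match between `a` and `b`. -/
noncomputable def maxApproxMatch (a b : List σ) : ℕ :=
  sSup {r | ∃ I, IsApproxMatch a b I ∧ I.length = r}

/-- The approximate distance `f̃` between two strings. -/
noncomputable def ftilde (a b : List σ) : ℝ :=
  max 0 (1 - 2 * (maxApproxMatch a b : ℝ) / (a.length + b.length))

end Paper

open Paper List

/-- `T(b)`: the collection of all nonempty finite consecutive substrings of `b^t`
for any `t ≥ 1`. -/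
def Tset {σ : Type*} (b : List σ) : Set (List σ) :=
  {c | c ≠ [] ∧ ∃ t, 1 ≤ t ∧ c <:+: Paper.rep b t}

/-!
Put `β = 1 - θ`, where `θ` is the infimum. For strings `x`, `y` the inequality `θ ≤ f̄(x, y)` is
equivalent to `2 · maxMatch x y ≤ β (|x| + |y|)`, and this linear form is additive: an optimal
match of `a ++ a'` against `d` cuts, where the indices of `a` end, into a match of `a` against a
prefix of `d` and a match of `a'` against the complementary suffix. Prefixes and suffixes of
substrings of powers of `b` are again such substrings, so induction on `ℓ` gives the linear
bound for `a^ℓ` against every substring of a power of `b`, in particular against `b^ℓ̃`.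
-/

namespace Paper

variable {σ : Type*}

section Matches

variable {a a' b d : List σ} {I : List (ℕ × ℕ)}

theorem isMatch_iff_pairwise :
    IsMatch a b I ↔ I.Pairwise (fun p q => p.1 < q.1 ∧ p.2 < q.2) ∧
      ∀ p ∈ I, p.1 < a.length ∧ p.2 < b.length ∧ a[p.1]? = b[p.2]? := by
  have : Trans (fun p q : ℕ × ℕ => p.1 < q.1 ∧ p.2 < q.2)
      (fun p q : ℕ × ℕ => p.1 < q.1 ∧ p.2 < q.2) (fun p q : ℕ × ℕ => p.1 < q.1 ∧ p.2 < q.2) :=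
    ⟨fun h₁ h₂ => ⟨h₁.1.trans h₂.1, h₁.2.trans h₂.2⟩⟩
  exact List.isChain_iff_pairwise.and Iff.rfl

theorem length_le_of_pairwise_lt {l : List ℕ} {n : ℕ} (h : l.Pairwise (· < ·))
    (hl : ∀ x ∈ l, x < n) : l.length ≤ n := by
  simpa using (h.nodup.subperm fun x hx => List.mem_range.2 (hl x hx)).length_le

theorem IsMatch.length_le_left (h : IsMatch a b I) : I.length ≤ a.length := by
  obtain ⟨hI, hmem⟩ := isMatch_iff_pairwise.mp h
  simpa using length_le_of_pairwise_lt (hI.map Prod.fst fun _ _ h => h.1)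
    (by simpa using fun p q hp => (hmem (p, q) hp).1)

theorem IsMatch.length_le_right (h : IsMatch a b I) : I.length ≤ b.length := by
  obtain ⟨hI, hmem⟩ := isMatch_iff_pairwise.mp h
  simpa using length_le_of_pairwise_lt (hI.map Prod.snd fun _ _ h => h.2)
    (by simpa using fun q p hp => (hmem (p, q) hp).2.1)

theorem bddAbove_match_lengths (a b : List σ) :
    BddAbove {r | ∃ I, IsMatch a b I ∧ I.length = r} :=
  ⟨a.length, by rintro r ⟨I, hI, rfl⟩; exact hI.length_le_left⟩

theorem IsMatch.length_le_maxMatch (h : IsMatch a b I) : I.length ≤ maxMatch a b :=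
  le_csSup (bddAbove_match_lengths a b) ⟨I, h, rfl⟩

theorem exists_isMatch_length_eq_maxMatch (a b : List σ) :
    ∃ I, IsMatch a b I ∧ I.length = maxMatch a b :=
  Nat.sSup_mem (s := {r | ∃ I, IsMatch a b I ∧ I.length = r})
    ⟨0, [], ⟨List.isChain_nil, by simp⟩, rfl⟩ (bddAbove_match_lengths a b)

theorem maxMatch_le_length_left (a b : List σ) : maxMatch a b ≤ a.length := by
  obtain ⟨I, hI, hM⟩ := exists_isMatch_length_eq_maxMatch a b
  exact hM ▸ hI.length_le_left

theorem maxMatch_le_length_right (a b : List σ) : maxMatch a b ≤ b.length := by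
  obtain ⟨I, hI, hM⟩ := exists_isMatch_length_eq_maxMatch a b
  exact hM ▸ hI.length_le_right

theorem two_mul_maxMatch_le (a b : List σ) : 2 * maxMatch a b ≤ a.length + b.length := by
  have := maxMatch_le_length_left a b
  have := maxMatch_le_length_right a b
  omega

theorem exists_eq_append_of_pairwise (i₀ : ℕ) :
    ∀ {I : List (ℕ × ℕ)}, I.Pairwise (fun p q => p.1 < q.1 ∧ p.2 < q.2) →
      ∃ I₁ I₂ k, I = I₁ ++ I₂ ∧ (∀ p ∈ I₁, p.1 < i₀ ∧ p.2 < k) ∧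
        ∀ q ∈ I₂, i₀ ≤ q.1 ∧ k ≤ q.2
  | [], _ => ⟨[], [], 0, rfl, by simp, by simp⟩
  | p :: I, h => by
    rw [List.pairwise_cons] at h
    by_cases hp : p.1 < i₀
    · obtain ⟨I₁, I₂, k, rfl, h₁, h₂⟩ := exists_eq_append_of_pairwise i₀ h.2
      refine ⟨p :: I₁, I₂, max k (p.2 + 1), rfl, ?_, fun q hq => ?_⟩
      · simp only [List.mem_cons, forall_eq_or_imp]
        exact ⟨⟨hp, by omega⟩, fun q hq => ⟨(h₁ q hq).1, by have := (h₁ q hq).2; omega⟩⟩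
      · have := h.1 q (List.mem_append_right _ hq)
        exact ⟨(h₂ q hq).1, max_le (h₂ q hq).2 this.2⟩
    · refine ⟨[], p :: I, p.2, rfl, by simp, ?_⟩
      simp only [List.mem_cons, forall_eq_or_imp]
      exact ⟨⟨by omega, le_rfl⟩, fun q hq => ⟨by have := (h.1 q hq).1; omega, (h.1 q hq).2.le⟩⟩

theorem IsMatch.exists_split (h : IsMatch (a ++ a') d I) :
    ∃ k I₁ I₂, IsMatch a (d.take k) I₁ ∧ IsMatch a' (d.drop k) I₂ ∧
      I.length = I₁.length + I₂.length := by
  obtain ⟨hI, hmem⟩ := isMatch_iff_pairwise.mp h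
  obtain ⟨I₁, I₂, k, rfl, h₁, h₂⟩ := exists_eq_append_of_pairwise a.length hI
  rw [List.pairwise_append] at hI
  refine ⟨k, I₁, I₂.map fun q => (q.1 - a.length, q.2 - k), ?_, ?_, by simp⟩
  · refine isMatch_iff_pairwise.mpr ⟨hI.1, fun p hp => ?_⟩
    obtain ⟨-, hpd, hpeq⟩ := hmem p (List.mem_append_left _ hp)
    obtain ⟨hpa, hpk⟩ := h₁ p hp
    refine ⟨hpa, by simp; omega, ?_⟩
    rwa [List.getElem?_take_of_lt hpk, ← List.getElem?_append_left hpa]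
  · refine isMatch_iff_pairwise.mpr ⟨?_, ?_⟩
    · refine List.pairwise_map.mpr (hI.2.1.imp_of_mem fun hp hq hpq => ?_)
      have := h₂ _ hp; have := h₂ _ hq
      omega
    · simp only [List.mem_map, forall_exists_index, and_imp]
      rintro _ q hq rfl
      obtain ⟨hqa, hqd, hqeq⟩ := hmem q (List.mem_append_right _ hq)
      obtain ⟨hq₁, hq₂⟩ := h₂ q hq
      simp only [List.length_append, List.length_drop] at hqa ⊢
      refine ⟨by omega, by omega, ?_⟩
      rwa [List.getElem?_drop, Nat.add_sub_cancel' hq₂, ← List.getElem?_append_right hq₁]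

theorem exists_maxMatch_append_le (a a' d : List σ) :
    ∃ k, maxMatch (a ++ a') d ≤ maxMatch a (d.take k) + maxMatch a' (d.drop k) := by
  obtain ⟨I, hI, hM⟩ := exists_isMatch_length_eq_maxMatch (a ++ a') d
  obtain ⟨k, I₁, I₂, h₁, h₂, hlen⟩ := hI.exists_split
  exact ⟨k, hM ▸ hlen ▸ add_le_add h₁.length_le_maxMatch h₂.length_le_maxMatch⟩

end Matches

theorem le_fbar_of_two_mul_maxMatch_le {x y : List σ} {m : ℝ} (hm : m ≤ 1)
    (h : 2 * (maxMatch x y : ℝ) ≤ (1 - m) * (x.length + y.length)) : m ≤ fbar x y := by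
  rw [fbar]
  rcases (by positivity : (0 : ℝ) ≤ x.length + y.length).eq_or_lt with hs | hs
  · simpa [← hs] using hm
  · rw [le_sub_comm, div_le_iff₀ hs]
    exact h

theorem two_mul_maxMatch_le_of_le_fbar {x y : List σ} {m : ℝ} (h : m ≤ fbar x y) :
    2 * (maxMatch x y : ℝ) ≤ (1 - m) * (x.length + y.length) := by
  rw [fbar] at h
  rcases (by positivity : (0 : ℝ) ≤ x.length + y.length).eq_or_lt with hs | hs
  · have : 2 * (maxMatch x y : ℝ) ≤ x.length + y.length := by
      exact_mod_cast two_mul_maxMatch_le x y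
    simpa [← hs] using this
  · rwa [le_sub_comm, div_le_iff₀ hs] at h

theorem fbar_nonneg (x y : List σ) : 0 ≤ fbar x y :=
  le_fbar_of_two_mul_maxMatch_le zero_le_one <| by
    rw [sub_zero, one_mul]
    exact_mod_cast two_mul_maxMatch_le x y

theorem fbar_le_one (x y : List σ) : fbar x y ≤ 1 := by
  rw [fbar, sub_le_self_iff]
  positivity

theorem fbar_nil_right (x : List σ) : fbar x [] = 1 := by
  simp [fbar, Nat.le_zero.mp (maxMatch_le_length_right x [])]

theorem rep_succ (w : List σ) (t : ℕ) : rep w (t + 1) = w ++ rep w t := by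
  simp [rep, List.replicate_succ]

theorem two_mul_maxMatch_rep_le {a : List σ} {D : List σ → Prop}
    (hD : ∀ ⦃c d⦄, c <:+: d → D d → D c) {β : ℝ} (hβ : 0 ≤ β)
    (ha : ∀ c, D c → 2 * (maxMatch a c : ℝ) ≤ β * (a.length + c.length)) (n : ℕ) :
    ∀ {d}, D d → 2 * (maxMatch (rep a n) d : ℝ) ≤ β * ((rep a n).length + d.length) := by
  induction n with
  | zero =>
    intro d _
    simp only [rep, List.replicate_zero, List.flatten_nil, List.length_nil,
      Nat.le_zero.mp (maxMatch_le_length_left [] d), Nat.cast_zero, mul_zero, zero_add]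
    positivity
  | succ n ih =>
    intro d hd
    obtain ⟨k, hk⟩ := exists_maxMatch_append_le a (rep a n) d
    have hlen : (d.take k).length + (d.drop k).length = d.length := by
      rw [← List.length_append, List.take_append_drop]
    calc 2 * (maxMatch (rep a (n + 1)) d : ℝ)
        ≤ 2 * (maxMatch a (d.take k) : ℝ) + 2 * (maxMatch (rep a n) (d.drop k) : ℝ) := by
          rw [rep_succ]; exact_mod_cast (by omega)
      _ ≤ β * (a.length + (d.take k).length) + β * ((rep a n).length + (d.drop k).length) :=
          add_le_add (ha _ (hD (List.take_prefix k d).isInfix hd))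
            (ih (hD (List.drop_suffix k d).isInfix hd))
      _ = β * ((rep a (n + 1)).length + d.length) := by
          rw [rep_succ, List.length_append, ← hlen]; push_cast; ring

theorem sInf_fbar_le_fbar (a : List σ) {T : Set (List σ)} {c : List σ} (hc : c ∈ T) :
    sInf {x : ℝ | ∃ c ∈ T, x = fbar a c} ≤ fbar a c :=
  csInf_le ⟨0, by rintro x ⟨c, -, rfl⟩; exact fbar_nonneg a c⟩ ⟨c, hc, rfl⟩

theorem sInf_fbar_le_one (a : List σ) (T : Set (List σ)) :
    sInf {x : ℝ | ∃ c ∈ T, x = fbar a c} ≤ 1 := by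
  rcases Set.eq_empty_or_nonempty {x : ℝ | ∃ c ∈ T, x = fbar a c} with hS | ⟨_, c, hc, rfl⟩
  · rw [hS, Real.sInf_empty]; exact zero_le_one
  · exact (sInf_fbar_le_fbar a hc).trans (fbar_le_one a c)

end Paper

open Paper

theorem mem_Tset_of_infix_rep {σ : Type*} {b c : List σ} {t : ℕ} (hc : c ≠ [])
    (h : c <:+: rep b t) : c ∈ Tset b :=
  ⟨hc, t + 1, by omega, h.trans (rep_succ b t ▸ List.suffix_append b (rep b t)).isInfix⟩

theorem statement8_general {σ : Type*} (a b : List σ)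
    (l lt : ℕ) :
    sInf {x : ℝ | ∃ c ∈ Tset b, x = fbar a c} ≤ fbar (Paper.rep a l) (Paper.rep b lt) := by
  set θ := sInf {x : ℝ | ∃ c ∈ Tset b, x = fbar a c}
  have hθ : θ ≤ 1 := sInf_fbar_le_one a (Tset b)
  have hθa : ∀ c, (∃ t, c <:+: rep b t) → θ ≤ fbar a c := by
    rintro c ⟨t, hc⟩
    rcases eq_or_ne c [] with rfl | hne
    · rw [fbar_nil_right]; exact hθ
    · exact sInf_fbar_le_fbar a (mem_Tset_of_infix_rep hne hc)
  have hD : ∀ ⦃c d : List σ⦄, c <:+: d → (∃ t, d <:+: rep b t) → ∃ t, c <:+: rep b t :=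
    fun _ _ hcd ⟨t, hd⟩ => ⟨t, hcd.trans hd⟩
  exact le_fbar_of_two_mul_maxMatch_le hθ <| two_mul_maxMatch_rep_le hD (sub_nonneg.mpr hθ)
    (fun c hc => two_mul_maxMatch_le_of_le_fbar (hθa c hc)) l ⟨lt, List.infix_rfl⟩

/-- **Repeated substring matching lemma.** For nonempty strings `a` and `b`
and any `ℓ, ℓ̃ ≥ 1`, `f̄(a^ℓ, b^ℓ̃) ≥ inf{f̄(a, c) : c ∈ T(b)}`. -/
theorem statement8 {σ : Type*} (a b : List σ) (ha : a ≠ []) (hb : b ≠ [])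
    (l lt : ℕ) (hl : 1 ≤ l) (hlt : 1 ≤ lt) :
    sInf {x : ℝ | ∃ c ∈ Tset b, x = fbar a c} ≤ fbar (Paper.rep a l) (Paper.rep b lt) :=
  statement8_general a b l lt
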